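/- arXiv:2207.05325 — 4 statements merged into one kernel-verified Lean document; each statement's English description precedes it below -/
import Mathlib

section
/- Let c be a positive integer all of whose prime factors are 2 or congruent to 1 mod 4, and let a be an integer with c dividing a^2+1. Then there exist integers x, y such that c = x^2 + y^2 and c divides x - a*y. -/
open Zsqrtd

/-- A Gaussian integer whose norm has prime absolute value is prime. -/
lemma GaussianInt.prime_of_natAbs_norm_prime {π : GaussianInt}
    (h : π.norm.natAbs.Prime) : Prime π := by
  rw [← UniqueFactorizationMonoid.irreducible_iff_prime]
  constructor
  · intro hu
    rw [← Zsqrtd.norm_eq_one_iff] at hu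
    rw [hu] at h
    exact Nat.not_prime_one h
  · intro u v huv
    have hn : π.norm.natAbs = u.norm.natAbs * v.norm.natAbs := by
      rw [huv, Zsqrtd.norm_mul, Int.natAbs_mul]
    rcases h.eq_one_or_self_of_dvd u.norm.natAbs ⟨v.norm.natAbs, hn⟩ with h1 | h1
    · left; exact Zsqrtd.norm_eq_one_iff.mp h1
    · right
      apply Zsqrtd.norm_eq_one_iff.mp
      rw [h1] at hn
      exact (Nat.mul_eq_left h.pos.ne').mp hn.symm

/-- Key lemma: there is a Gaussian integer of norm `c` dividing `a + i`. -/
lemma exists_gaussian_norm_eq_dvd :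
    ∀ c : ℕ, (∀ q : ℕ, q.Prime → q ∣ c → q = 2 ∨ q % 4 = 1) →
    ∀ a : ℤ, (c : ℤ) ∣ a ^ 2 + 1 → 0 < c →
    ∃ z : GaussianInt, z.norm = (c : ℤ) ∧ z ∣ (⟨a, 1⟩ : GaussianInt) := by
  intro c
  induction c using Nat.strong_induction_on with
  | _ c ih =>
  intro hfac a ha hc
  rcases eq_or_lt_of_le (show 1 ≤ c from hc) with h1 | h2
  · exact ⟨1, by simp [← h1], one_dvd _⟩
  -- `c ≥ 2`; pick the least prime factor `q` and its multiplicity `k`.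
  set q := c.minFac with hqdef
  have hq : q.Prime := Nat.minFac_prime (by omega)
  have hqc : q ∣ c := Nat.minFac_dvd c
  set k := c.factorization q with hkdef
  have hcne : c ≠ 0 := by omega
  have hk1 : 1 ≤ k := by
    rw [hkdef, ← hq.pow_dvd_iff_le_factorization hcne, pow_one]; exact hqc
  set c' := c / q ^ k with hc'def
  have hcc : q ^ k * c' = c := Nat.ordProj_mul_ordCompl_eq_self c q
  have hqc' : ¬ q ∣ c' := Nat.not_dvd_ordCompl hq hcne
  have hc'pos : 0 < c' := Nat.ordCompl_pos q hcne
  have hqk1 : 1 < q ^ k := by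
    calc 1 < q := hq.one_lt
    _ = q ^ 1 := (pow_one q).symm
    _ ≤ q ^ k := Nat.pow_le_pow_right hq.pos hk1
  have hc'lt : c' < c := by
    rcases Nat.lt_or_ge c' c with h | h
    · exact h
    · nlinarith [hcc]
  have hc'dvd : c' ∣ c := ⟨q ^ k, by rw [← hcc]; ring⟩
  -- inductive step for `c'`
  obtain ⟨z', hz'n, hz'd⟩ := ih c' hc'lt
    (fun p hp hpc => hfac p hp (hpc.trans hc'dvd)) a
    ((Int.natCast_dvd_natCast.mpr hc'dvd).trans ha) hc'pos
  -- find a Gaussian prime `π` of norm `q` with `π ^ k ∣ a + i`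
  have key : ∃ π : GaussianInt, π.norm = (q : ℤ) ∧ Prime π ∧
      π ^ k ∣ (⟨a, 1⟩ : GaussianInt) := by
    rcases hfac q hq hqc with hq2 | hq4
    · -- `q = 2`: then `a` is odd and `k = 1`, `π = 1 + i`.
      have h2a : (2 : ℤ) ∣ a ^ 2 + 1 := by
        have : ((2 : ℕ) : ℤ) ∣ (c : ℤ) := Int.natCast_dvd_natCast.mpr (hq2 ▸ hqc)
        exact_mod_cast this.trans ha
      obtain ⟨b, hb⟩ : Odd a := by
        rcases Int.even_or_odd a with ⟨b, hb⟩ | h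
        · exfalso
          obtain ⟨t, ht⟩ := h2a
          obtain ⟨s, hs⟩ : ∃ s, b * b = s := ⟨_, rfl⟩
          have h4' : a ^ 2 + 1 = 4 * s + 1 := by rw [hb, ← hs]; ring
          omega
        · exact h
      have h4 : ¬ (4 : ℕ) ∣ c := by
        intro h4c
        have h4a : ((4 : ℕ) : ℤ) ∣ a ^ 2 + 1 :=
          (Int.natCast_dvd_natCast.mpr h4c).trans ha
        obtain ⟨t, ht⟩ := h4a
        obtain ⟨s, hs⟩ : ∃ s, b * b + b = s := ⟨_, rfl⟩
        have h4' : a ^ 2 + 1 = 4 * s + 2 := by rw [hb, ← hs]; ring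
        have h4'' : ((4 : ℕ) : ℤ) = 4 := by norm_num
        rw [h4''] at ht
        omega
      have hkeq : k = 1 := by
        have : ¬ 2 ≤ k := by
          intro h2k
          apply h4
          have : q ^ 2 ∣ c := (hq.pow_dvd_iff_le_factorization hcne).mpr h2k
          rw [hq2] at this
          simpa using this
        omega
      refine ⟨⟨1, 1⟩, ?_, ?_, ?_⟩
      · simp [Zsqrtd.norm_def, hq2]
      · apply GaussianInt.prime_of_natAbs_norm_prime
        have : (⟨1, 1⟩ : GaussianInt).norm = 2 := by simp [Zsqrtd.norm_def]
        rw [this]; norm_num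
      · rw [hkeq, pow_one]
        refine ⟨⟨b + 1, -b⟩, ?_⟩
        ext <;> simp [Zsqrtd.re_mul, Zsqrtd.im_mul] <;> omega
    · -- `q ≡ 1 (mod 4)`: use the two-square decomposition of `q`.
      haveI : Fact q.Prime := ⟨hq⟩
      obtain ⟨u, v, huv⟩ := Nat.Prime.sq_add_sq (p := q) (by omega)
      set π₀ : GaussianInt := ⟨(u : ℤ), (v : ℤ)⟩ with hπ₀def
      have hπ₀n : π₀.norm = (q : ℤ) := by
        simp only [Zsqrtd.norm_def, hπ₀def]
        push_cast [← huv]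
        ring
      have hπ₀p : Prime π₀ := by
        apply GaussianInt.prime_of_natAbs_norm_prime
        rw [hπ₀n]; simpa using hq
      have hstarn : (star π₀).norm = (q : ℤ) := by
        rw [Zsqrtd.norm_conj, hπ₀n]
      have hstarp : Prime (star π₀) := by
        apply GaussianInt.prime_of_natAbs_norm_prime
        rw [hstarn]; simpa using hq
      have hqfact : ((q : ℤ) : GaussianInt) = π₀ * star π₀ := by
        rw [← hπ₀n]; exact Zsqrtd.norm_eq_mul_conj π₀
      -- `(a+i)(a-i) = a²+1`
      have hprod : (⟨a, 1⟩ : GaussianInt) * ⟨a, -1⟩ = ((a ^ 2 + 1 : ℤ) : GaussianInt) := by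
        ext <;>
          simp only [Zsqrtd.re_mul, Zsqrtd.im_mul, Zsqrtd.re_intCast, Zsqrtd.im_intCast] <;>
          ring
      have hdvd1 : ((q : ℤ) : GaussianInt) ^ k ∣ (⟨a, 1⟩ : GaussianInt) * ⟨a, -1⟩ := by
        rw [hprod]
        have h1 : (q : ℤ) ^ k ∣ (c : ℤ) := by
          have := Nat.ordProj_dvd c q
          exact_mod_cast Int.natCast_dvd_natCast.mpr this
        have h2 : (q : ℤ) ^ k ∣ a ^ 2 + 1 := h1.trans ha
        obtain ⟨t, ht⟩ := h2
        exact ⟨(t : GaussianInt), by push_cast [ht]; ring⟩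
      have hq_odd : ¬ (q : ℤ) ∣ 4 := by
        intro hd
        have : q ∣ 4 := by exact_mod_cast hd
        have : q ∣ 2 ^ 2 := by simpa using this
        have := hq.dvd_of_dvd_pow this
        have h2 := Nat.le_of_dvd (by norm_num) this
        have h3 := hq.two_le
        omega
      -- `π₀` divides one of the two factors; choose `π` dividing `a + i`.
      have hπ₀prod : π₀ ∣ (⟨a, 1⟩ : GaussianInt) * ⟨a, -1⟩ := by
        have : π₀ ∣ ((q : ℤ) : GaussianInt) ^ k := by
          refine dvd_pow ?_ (by omega)
          rw [hqfact]; exact Dvd.intro _ rfl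
        exact this.trans hdvd1
      have hnotboth : ∀ π : GaussianInt, π.norm = (q : ℤ) →
          π ∣ (⟨a, 1⟩ : GaussianInt) → ¬ π ∣ (⟨a, -1⟩ : GaussianInt) := by
        intro π hn h1 h2
        have hdiff : π ∣ (⟨0, 2⟩ : GaussianInt) := by
          have : (⟨0, 2⟩ : GaussianInt) = ⟨a, 1⟩ - ⟨a, -1⟩ := by
            ext <;> simp
          rw [this]; exact dvd_sub h1 h2
        obtain ⟨t, ht⟩ := hdiff
        have : (⟨0, 2⟩ : GaussianInt).norm = π.norm * t.norm := by
          rw [ht, Zsqrtd.norm_mul]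
        have h4 : (4 : ℤ) = π.norm * t.norm := by
          simpa [Zsqrtd.norm_def] using this
        exact hq_odd ⟨t.norm, by rw [← hn]; linarith⟩
      obtain ⟨π, hπn, hπp, hπd, hπnd⟩ : ∃ π : GaussianInt, π.norm = (q : ℤ) ∧ Prime π ∧
          π ∣ (⟨a, 1⟩ : GaussianInt) ∧ ¬ π ∣ (⟨a, -1⟩ : GaussianInt) := by
        rcases hπ₀p.dvd_mul.mp hπ₀prod with h | h
        · exact ⟨π₀, hπ₀n, hπ₀p, h, hnotboth π₀ hπ₀n h⟩
        · have hsd : star π₀ ∣ (⟨a, 1⟩ : GaussianInt) := by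
            obtain ⟨t, ht⟩ := h
            refine ⟨star t, ?_⟩
            have := congrArg star ht
            simpa using this
          exact ⟨star π₀, hstarn, hstarp, hsd, hnotboth _ hstarn hsd⟩
      -- `π ^ k` divides the product and is coprime to `a - i`.
      have hπkdvd : π ^ k ∣ (⟨a, 1⟩ : GaussianInt) * ⟨a, -1⟩ := by
        have hππ : π * star π = ((q : ℤ) : GaussianInt) := by
          rw [← hπn]; exact (Zsqrtd.norm_eq_mul_conj π).symm
        have : π ^ k ∣ ((q : ℤ) : GaussianInt) ^ k := by
          rw [← hππ, mul_pow]; exact Dvd.intro _ rfl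
        exact this.trans hdvd1
      have hcop : IsCoprime (π ^ k) (⟨a, -1⟩ : GaussianInt) :=
        (hπp.coprime_iff_not_dvd.mpr hπnd).pow_left
      exact ⟨π, hπn, hπp, hcop.dvd_of_dvd_mul_right hπkdvd⟩
  obtain ⟨π, hπn, hπp, hπd⟩ := key
  -- combine: `z = π ^ k * z'`
  have hπz' : ¬ π ∣ z' := by
    intro hd
    obtain ⟨t, ht⟩ := hd
    have : z'.norm = π.norm * t.norm := by rw [ht, Zsqrtd.norm_mul]
    rw [hz'n, hπn] at this
    have : (q : ℤ) ∣ (c' : ℤ) := ⟨t.norm, this⟩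
    exact hqc' (by exact_mod_cast this)
  have hcop : IsCoprime (π ^ k) z' :=
    (hπp.coprime_iff_not_dvd.mpr hπz').pow_left
  refine ⟨π ^ k * z', ?_, hcop.mul_dvd hπd hz'd⟩
  have hpk : Zsqrtd.norm (π ^ k) = π.norm ^ k := map_pow Zsqrtd.normMonoidHom π k
  rw [Zsqrtd.norm_mul, hpk, hπn, hz'n, ← hcc]
  push_cast
  ring

/-- **Two-square lemma with congruence condition.**
If every prime factor of the positive integer `c` is `2` or `≡ 1 (mod 4)`,
and `c ∣ a² + 1`, then there exist integers `x, y` with `c = x² + y²`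
and `c ∣ x - a·y`. -/
theorem two_square_with_congruence
    (c : ℕ) (hc : 0 < c)
    (hfac : ∀ q : ℕ, q.Prime → q ∣ c → q = 2 ∨ q % 4 = 1)
    (a : ℤ) (ha : (c : ℤ) ∣ a ^ 2 + 1) :
    ∃ x y : ℤ, (c : ℤ) = x ^ 2 + y ^ 2 ∧ (c : ℤ) ∣ x - a * y := by
  obtain ⟨z, hzn, w, hw⟩ := exists_gaussian_norm_eq_dvd c hfac a ha hc
  refine ⟨z.re, z.im, ?_, ?_⟩
  · rw [← hzn]
    simp [Zsqrtd.norm_def]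
    ring
  · -- `star z * (a + i) = (c : ℤ[i]) * w`; compare imaginary parts.
    have h1 : star z * (⟨a, 1⟩ : GaussianInt) = ((c : ℤ) : GaussianInt) * w := by
      rw [hw, ← mul_assoc, mul_comm (star z) z, ← Zsqrtd.norm_eq_mul_conj, hzn]
    have h2 := congrArg Zsqrtd.im h1
    simp [Zsqrtd.im_mul] at h2
    refine ⟨w.im, ?_⟩
    rw [← h2]
    ring
end

section
/- Let c be a positive integer all of whose prime factors are 3 or congruent to 1 mod 3, and let a be an integer with a^2 - a + 1 ≡ 0 (mod c). Then there exist integers x, y such that c = 3x^2 + y^2 and c divides (2a-1)x + y. -/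
/-- Descent lemma: any positive `c` dividing `a² - a + 1` is a value of the
Eisenstein norm form `u² - uv + v²`, with the divisibility `c ∣ u - a v`. -/
lemma eisenstein_norm_rep :
    ∀ c : ℕ, 0 < c → ∀ a : ℤ, (c : ℤ) ∣ a ^ 2 - a + 1 →
      ∃ u v : ℤ, (c : ℤ) = u ^ 2 - u * v + v ^ 2 ∧ (c : ℤ) ∣ u - a * v := by
  intro c
  induction c using Nat.strong_induction_on with
  | _ c IH =>
    intro hc a ha
    rcases eq_or_lt_of_le (show 1 ≤ c from hc) with h1 | h2
    · refine ⟨1, 0, ?_, ?_⟩ <;> simp [← h1]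
    -- now c ≥ 2
    have hc2 : (2 : ℤ) ≤ (c : ℤ) := by exact_mod_cast h2
    have hc0 : (0 : ℤ) < (c : ℤ) := by positivity
    set a' : ℤ := if 2 * (a % (c : ℤ)) ≤ (c : ℤ) then a % (c : ℤ) else a % (c : ℤ) - c with ha'
    have hbase : (c : ℤ) ∣ a - a % (c : ℤ) := Int.dvd_self_sub_of_emod_eq rfl
    have hmod : (c : ℤ) ∣ a - a' := by
      rcases le_or_gt (2 * (a % (c : ℤ))) (c : ℤ) with h | h
      · simpa [ha', if_pos h] using hbase
      · have heq : a - (a % (c : ℤ) - c) = (a - a % (c : ℤ)) + c := by ring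
        simp only [ha', if_neg (not_le.mpr h), heq]
        exact dvd_add hbase (dvd_refl _)
    -- bound : (2a'-1)² ≤ c²
    have hlo : 0 ≤ a % (c : ℤ) := Int.emod_nonneg a (by positivity)
    have hhi : a % (c : ℤ) < c := Int.emod_lt_of_pos a hc0
    have hbound : (2 * a' - 1) ^ 2 ≤ (c : ℤ) ^ 2 := by
      rcases le_or_gt (2 * (a % (c : ℤ))) (c : ℤ) with h | h
      · simp only [ha', if_pos h]
        nlinarith [hlo, h, hc2]
      · simp only [ha', if_neg (not_le.mpr h)]
        nlinarith [hhi, h, hc2]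
    -- c divides a'² - a' + 1
    have ha'dvd : (c : ℤ) ∣ a' ^ 2 - a' + 1 := by
      obtain ⟨k, hk⟩ := hmod
      obtain ⟨l, hl⟩ := ha
      refine ⟨l - k * (a + a') + k, ?_⟩
      have haa : a' = a - (c : ℤ) * k := by linarith [hk]
      rw [haa]; linear_combination hl
    obtain ⟨m, hm⟩ := ha'dvd
    have hmpos : 0 < m := by nlinarith [sq_nonneg (2 * a' - 1), hc0]
    have hmlt : m < (c : ℤ) := by nlinarith [hbound, hc2]
    have hmnat : m.toNat < c := by omega
    have hmdvd : ((m.toNat : ℕ) : ℤ) ∣ a' ^ 2 - a' + 1 := by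
      rw [Int.toNat_of_nonneg hmpos.le, hm]; exact ⟨c, mul_comm _ _⟩
    obtain ⟨s, t, hst, hdvd⟩ := IH m.toNat hmnat (by omega) a' hmdvd
    rw [Int.toNat_of_nonneg hmpos.le] at hst hdvd
    obtain ⟨v, hv⟩ := hdvd
    set u : ℤ := a' * v + (c : ℤ) * t with hu
    have hmu : m * u = a' * (s - t) + t := by
      rw [hu]; linear_combination -(a' * hv) - t * hm
    have hmv : m * v = s - a' * t := hv.symm
    -- the norm form identity
    have hABm : (a' * (s - t) + t) ^ 2 - (a' * (s - t) + t) * (s - a' * t) + (s - a' * t) ^ 2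
        = m ^ 2 * (c : ℤ) := by
      linear_combination (s ^ 2 - s * t + t ^ 2) * hm - (c : ℤ) * m * hst
    have hkey : m ^ 2 * (u ^ 2 - u * v + v ^ 2) = m ^ 2 * (c : ℤ) := by
      have hsq : m ^ 2 * (u ^ 2 - u * v + v ^ 2)
          = (m * u) ^ 2 - (m * u) * (m * v) + (m * v) ^ 2 := by ring
      rw [hsq, hmu, hmv, hABm]
    have hform : (c : ℤ) = u ^ 2 - u * v + v ^ 2 := by
      have hm2 : (m : ℤ) ^ 2 ≠ 0 := pow_ne_zero _ hmpos.ne'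
      exact (mul_left_cancel₀ hm2 hkey).symm
    refine ⟨u, v, hform, ?_⟩
    have h1 : u - a' * v = (c : ℤ) * t := by rw [hu]; ring
    have h2 : u - a * v = (u - a' * v) + -((a - a') * v) := by ring
    rw [h2, h1]
    exact dvd_add (Dvd.intro _ rfl) (dvd_neg.mpr (hmod.mul_right v))

/-- **Eisenstein-integer analogue of the two-square lemma.**
If every prime factor of the positive integer `c` is `3` or `≡ 1 (mod 3)`,
and `c ∣ a² - a + 1`, then there exist integers `x, y` with `c = 3x² + y²`
and `c ∣ (2a - 1)x + y`. -/
theorem three_square_with_congruence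
    (c : ℕ) (hc : 0 < c)
    (hfac : ∀ q : ℕ, q.Prime → q ∣ c → q = 3 ∨ q % 3 = 1)
    (a : ℤ) (ha : (c : ℤ) ∣ a ^ 2 - a + 1) :
    ∃ x y : ℤ, (c : ℤ) = 3 * x ^ 2 + y ^ 2 ∧ (c : ℤ) ∣ (2 * a - 1) * x + y := by
  obtain ⟨u, v, hform, hdvd⟩ := eisenstein_norm_rep c hc a ha
  -- rotation: (u, v) ↦ (-v, u - v) preserves everything
  have rot : ∀ u v : ℤ, (c : ℤ) = u ^ 2 - u * v + v ^ 2 → (c : ℤ) ∣ u - a * v →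
      (c : ℤ) = (-v) ^ 2 - (-v) * (u - v) + (u - v) ^ 2 ∧ (c : ℤ) ∣ (-v) - a * (u - v) := by
    intro u v hf hd
    refine ⟨by rw [hf]; ring, ?_⟩
    have heq : (-v) - a * (u - v) = -(a * (u - a * v)) - v * (a ^ 2 - a + 1) := by ring
    rw [heq]
    exact dvd_sub (dvd_neg.mpr (hd.mul_left a)) (ha.mul_left v)
  -- get a pair with even second coordinate
  have main : ∃ u v : ℤ, (c : ℤ) = u ^ 2 - u * v + v ^ 2 ∧ (c : ℤ) ∣ u - a * v ∧ Even v := by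
    rcases Int.even_or_odd v with hv | hv
    · exact ⟨u, v, hform, hdvd, hv⟩
    · rcases Int.even_or_odd u with hu | hu
      · obtain ⟨h1, h2⟩ := rot u v hform hdvd
        obtain ⟨h3, h4⟩ := rot _ _ h1 h2
        refine ⟨_, _, h3, h4, ?_⟩
        have heq : -v - (u - v) = -u := by ring
        rw [heq]
        exact hu.neg
      · obtain ⟨h1, h2⟩ := rot u v hform hdvd
        exact ⟨_, _, h1, h2, hu.sub_odd hv⟩
  obtain ⟨U, V, hf, hd, hev⟩ := main
  obtain ⟨x, hx⟩ := hev
  refine ⟨x, x - U, ?_, ?_⟩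
  · rw [hf, hx]; ring
  · have heq : (2 * a - 1) * x + (x - U) = -(U - a * (x + x)) := by ring
    rw [heq, ← hx]
    exact dvd_neg.mpr hd
end

section
/- For a nonzero integer b and complex s with Re(s) > 1, the Dirichlet series of Ramanujan sums satisfies Σ_{n=1}^∞ G(b, 1_n) n^{-s} = σ_{s-1}(b) / (ζ(s) |b|^{s-1}), where σ_{s-1}(b) = Σ_{d | |b|} d^{s-1}. -/
open Complex Real ArithmeticFunction
open scoped LSeries.notation
open scoped ArithmeticFunction.Moebius ArithmeticFunction.zeta

/-- The Ramanujan sum `G(b, 𝟙_n) = Σ_{a ∈ (ℤ/nℤ)ˣ} e^{2πiab/n}`. -/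
noncomputable def ramanujanSum (b : ℤ) (n : ℕ) : ℂ :=
  ∑ a ∈ (Finset.range n).filter (fun a => Nat.Coprime a n),
    Complex.exp (2 * Real.pi * Complex.I * a * b / n)

noncomputable def ramF (b : ℤ) : ℕ → ℂ := fun n => if (n : ℤ) ∣ b then (n : ℂ) else 0

lemma sum_exp_eq (b : ℤ) {m : ℕ} (hm : 0 < m) :
    ∑ k ∈ Finset.range m, Complex.exp (2 * Real.pi * Complex.I * k * b / m) =
      if (m : ℤ) ∣ b then (m : ℂ) else 0 := by
  have hm0 : (m : ℂ) ≠ 0 := Nat.cast_ne_zero.mpr hm.ne'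
  set z : ℂ := Complex.exp (2 * Real.pi * Complex.I * b / m) with hz
  have hzk : ∀ k : ℕ, Complex.exp (2 * Real.pi * Complex.I * k * b / m) = z ^ k := by
    intro k
    rw [hz, ← Complex.exp_nat_mul]
    ring_nf
  simp only [hzk]
  have hzm : z ^ m = 1 := by
    rw [hz, ← Complex.exp_nat_mul]
    have : (m : ℂ) * (2 * Real.pi * Complex.I * b / m) = b * (2 * Real.pi * Complex.I) := by
      field_simp
    rw [this, Complex.exp_int_mul_two_pi_mul_I]
  by_cases hd : (m : ℤ) ∣ b
  · rw [if_pos hd]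
    obtain ⟨c, hc⟩ := hd
    have hz1 : z = 1 := by
      rw [hz]
      have : 2 * Real.pi * Complex.I * b / m = c * (2 * Real.pi * Complex.I) := by
        rw [hc]; push_cast; field_simp
      rw [this, Complex.exp_int_mul_two_pi_mul_I]
    simp [hz1]
  · have hz1 : z ≠ 1 := by
      intro h
      rw [hz, Complex.exp_eq_one_iff] at h
      obtain ⟨n, hn⟩ := h
      apply hd
      refine ⟨n, ?_⟩
      have hmc := hm0
      have h2 : (2 * Real.pi * Complex.I : ℂ) ≠ 0 := by
        simp [Real.pi_ne_zero, Complex.I_ne_zero]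
      have h3 : 2 * Real.pi * Complex.I * (b : ℂ)
          = 2 * Real.pi * Complex.I * ((n : ℂ) * m) := by
        field_simp at hn
        linear_combination (2 * Real.pi * Complex.I) * hn
      have := mul_left_cancel₀ h2 h3
      have : (b : ℂ) = ↑m * n := by rw [this]; ring
      exact_mod_cast this
    rw [geom_sum_eq hz1, hzm, sub_self, zero_div]
    simp [hd]

lemma ramanujanSum_eq_conv (b : ℤ) {n : ℕ} (hn : 0 < n) :
    ramanujanSum b n = ∑ d ∈ n.divisors, (μ d : ℂ) * ramF b (n / d) := by
  have hdivg : ∀ a : ℕ, (Nat.gcd a n).divisors = n.divisors.filter (· ∣ a) := by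
    intro a
    ext d
    simp only [Nat.mem_divisors, Finset.mem_filter, Nat.dvd_gcd_iff]
    constructor
    · rintro ⟨⟨h1, h2⟩, -⟩; exact ⟨⟨h2, hn.ne'⟩, h1⟩
    · rintro ⟨⟨h2, -⟩, h1⟩; exact ⟨⟨h1, h2⟩, Nat.gcd_ne_zero_right hn.ne'⟩
  have hind : ∀ a : ℕ, (if Nat.Coprime a n then (1 : ℂ) else 0)
      = ∑ d ∈ n.divisors.filter (· ∣ a), (μ d : ℂ) := by
    intro a
    rw [← hdivg a]
    have h1 : ((μ * ζ : ArithmeticFunction ℂ)) (Nat.gcd a n)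
        = ∑ d ∈ (Nat.gcd a n).divisors, ((μ : ArithmeticFunction ℂ)) d :=
      coe_mul_zeta_apply
    rw [coe_moebius_mul_coe_zeta, one_apply] at h1
    simp only [intCoe_apply] at h1
    rw [← h1]
  calc ramanujanSum b n
      = ∑ a ∈ Finset.range n, (if Nat.Coprime a n then (1 : ℂ) else 0) *
          Complex.exp (2 * Real.pi * Complex.I * a * b / n) := by
        rw [ramanujanSum, Finset.sum_filter]
        refine Finset.sum_congr rfl fun a _ => ?_
        split <;> simp
    _ = ∑ a ∈ Finset.range n, ∑ d ∈ n.divisors,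
          (if d ∣ a then (μ d : ℂ) * Complex.exp (2 * Real.pi * Complex.I * a * b / n) else 0) := by
        refine Finset.sum_congr rfl fun a _ => ?_
        rw [hind a, Finset.sum_mul, ← Finset.sum_filter]
    _ = ∑ d ∈ n.divisors, ∑ a ∈ Finset.range n,
          (if d ∣ a then (μ d : ℂ) * Complex.exp (2 * Real.pi * Complex.I * a * b / n) else 0) :=
        Finset.sum_comm
    _ = ∑ d ∈ n.divisors, (μ d : ℂ) * ramF b (n / d) := by
        refine Finset.sum_congr rfl fun d hd => ?_
        obtain ⟨⟨m, hm⟩, hn0⟩ := Nat.mem_divisors.mp hd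
        have hd0 : 0 < d := Nat.pos_of_mem_divisors hd
        have hm0 : 0 < m := by
          rcases Nat.eq_zero_or_pos m with h | h
          · subst h; simp at hm; omega
          · exact h
        rw [← Finset.sum_filter]
        have hre : ∑ a ∈ (Finset.range n).filter (d ∣ ·),
            Complex.exp (2 * Real.pi * Complex.I * a * b / n)
            = ∑ k ∈ Finset.range m,
              Complex.exp (2 * Real.pi * Complex.I * k * b / m) := by
          refine Finset.sum_nbij' (fun a => a / d) (fun k => d * k) ?_ ?_ ?_ ?_ ?_
          · intro a ha
            simp only [Finset.mem_filter, Finset.mem_range] at ha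
            simp only [Finset.mem_range]
            obtain ⟨ha1, c, rfl⟩ := ha
            rw [Nat.mul_div_cancel_left c hd0]
            rw [hm] at ha1
            exact lt_of_mul_lt_mul_left ha1 (Nat.zero_le d)
          · intro k hk
            simp only [Finset.mem_range] at hk
            simp only [Finset.mem_filter, Finset.mem_range]
            exact ⟨by rw [hm]; exact (Nat.mul_lt_mul_left hd0).mpr hk, Dvd.intro k rfl⟩
          · intro a ha
            simp only [Finset.mem_filter] at ha
            exact Nat.mul_div_cancel' ha.2
          · intro k _
            exact Nat.mul_div_cancel_left k hd0
          · intro a ha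
            simp only [Finset.mem_filter, Finset.mem_range] at ha
            obtain ⟨-, c, rfl⟩ := ha
            simp only [Nat.mul_div_cancel_left c hd0]
            congr 1
            rw [hm]
            have hdc : (d : ℂ) ≠ 0 := Nat.cast_ne_zero.mpr hd0.ne'
            have hmc : (m : ℂ) ≠ 0 := Nat.cast_ne_zero.mpr hm0.ne'
            push_cast
            field_simp
        rw [← Finset.mul_sum, hre, sum_exp_eq b hm0]
        have : n / d = m := by rw [hm, Nat.mul_div_cancel_left m hd0]
        rw [this, ramF]

open scoped LSeries.notation

lemma LSeriesSummable_ramF (b : ℤ) (hb : b ≠ 0) (s : ℂ) : LSeriesSummable (ramF b) s := by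
  apply summable_of_ne_finset_zero (s := Finset.range (b.natAbs + 1))
  intro n hn
  simp only [Finset.mem_range, not_lt] at hn
  have hn0 : n ≠ 0 := by omega
  rw [LSeries.term_of_ne_zero hn0, ramF]
  have hnd : ¬ (n : ℤ) ∣ b := by
    intro h
    rw [Int.natCast_dvd] at h
    have := Nat.le_of_dvd (Int.natAbs_pos.mpr hb) h
    omega
  rw [if_neg hnd, zero_div]

lemma LSeries_ramF (b : ℤ) (hb : b ≠ 0) (s : ℂ) :
    LSeries (ramF b) s =
      (∑ d ∈ b.natAbs.divisors, (d : ℂ) ^ (s - 1)) / (b.natAbs : ℂ) ^ (s - 1) := by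
  have hN : 0 < b.natAbs := Int.natAbs_pos.mpr hb
  have h1 : LSeries (ramF b) s = ∑ d ∈ b.natAbs.divisors, LSeries.term (ramF b) s d := by
    refine tsum_eq_sum fun n hn => ?_
    rcases Nat.eq_zero_or_pos n with rfl | hn0
    · exact LSeries.term_zero _ _
    · rw [LSeries.term_of_ne_zero hn0.ne', ramF]
      have : ¬ (n : ℤ) ∣ b := fun h => hn (Nat.mem_divisors.mpr ⟨Int.natCast_dvd.mp h, hN.ne'⟩)
      rw [if_neg this, zero_div]
  rw [h1]
  have h2 : ∀ d ∈ b.natAbs.divisors,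
      LSeries.term (ramF b) s d = (d : ℂ) / (d : ℂ) ^ s := by
    intro d hd
    have hd0 : d ≠ 0 := (Nat.pos_of_mem_divisors hd).ne'
    rw [LSeries.term_of_ne_zero hd0, ramF]
    rw [if_pos (Int.natCast_dvd.mpr (by simpa using (Nat.mem_divisors.mp hd).1))]
  rw [Finset.sum_congr rfl h2, ← Nat.sum_div_divisors b.natAbs (fun d => (d : ℂ) / (d : ℂ) ^ s),
    Finset.sum_div]
  refine Finset.sum_congr rfl fun d hd => ?_
  obtain ⟨hdvd, -⟩ := Nat.mem_divisors.mp hd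
  have hd0 : 0 < d := Nat.pos_of_mem_divisors hd
  set m := b.natAbs / d with hmdef
  have hmd : m * d = b.natAbs := Nat.div_mul_cancel hdvd
  have hm0 : 0 < m := by
    rcases Nat.eq_zero_or_pos m with h | h
    · rw [h, zero_mul] at hmd; omega
    · exact h
  have hmc : (m : ℂ) ≠ 0 := Nat.cast_ne_zero.mpr hm0.ne'
  have hdc : (d : ℂ) ≠ 0 := Nat.cast_ne_zero.mpr hd0.ne'
  have hms : (m : ℂ) ^ (s - 1) ≠ 0 := by
    intro h
    exact hmc (Complex.cpow_eq_zero_iff _ _ |>.mp h).1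
  have hds : (d : ℂ) ^ (s - 1) ≠ 0 := by
    intro h
    exact hdc (Complex.cpow_eq_zero_iff _ _ |>.mp h).1
  have hsplit : ((b.natAbs : ℂ)) ^ (s - 1) = (m : ℂ) ^ (s - 1) * (d : ℂ) ^ (s - 1) := by
    rw [← hmd]
    push_cast
    have h := Complex.mul_cpow_ofReal_nonneg (Nat.cast_nonneg m) (Nat.cast_nonneg d) (s - 1)
    push_cast at h
    exact h
  have hpow : (m : ℂ) ^ s = (m : ℂ) ^ (s - 1) * (m : ℂ) := by
    calc (m : ℂ) ^ s = (m : ℂ) ^ (s - 1 + 1) := by ring_nf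
      _ = (m : ℂ) ^ (s - 1) * (m : ℂ) ^ (1 : ℂ) := Complex.cpow_add _ _ hmc
      _ = (m : ℂ) ^ (s - 1) * (m : ℂ) := by rw [Complex.cpow_one]
  rw [hsplit, hpow]
  field_simp

/-- Ramanujan's identity: for `b ≠ 0` and `Re(s) > 1`,
`Σ_{n≥1} G(b, 𝟙_n) n^{-s} = σ_{s-1}(b) / (ζ(s) |b|^{s-1})`. -/
theorem dirichlet_series_ramanujanSum
    (b : ℤ) (hb : b ≠ 0) (s : ℂ) (hs : 1 < s.re) :
    ∑' n : ℕ, ramanujanSum b (n + 1) / ((n + 1 : ℕ) : ℂ) ^ s =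
      (∑ d ∈ b.natAbs.divisors, (d : ℂ) ^ (s - 1)) /
        (riemannZeta s * (b.natAbs : ℂ) ^ (s - 1)) := by
  have hmu : LSeriesSummable ↗μ s := ArithmeticFunction.LSeriesSummable_moebius_iff.mpr hs
  have hfs : LSeriesSummable (ramF b) s := LSeriesSummable_ramF b hb s
  set f : ℕ → ℂ := ↗μ ⍟ ramF b with hf
  have hconv : ∀ n : ℕ, 0 < n → f n = ramanujanSum b n := by
    intro n hn
    rw [hf, LSeries.convolution_def, ramanujanSum_eq_conv b hn,
      ← Nat.sum_divisorsAntidiagonal (fun d e => ((μ d : ℂ)) * ramF b e)]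
  have hsumf : LSeriesSummable f s := hmu.convolution hfs
  have hLf : LSeries f s = LSeries ↗μ s * LSeries (ramF b) s := LSeries_convolution' hmu hfs
  have hLmu : LSeries ↗μ s = (riemannZeta s)⁻¹ := by
    have h1 := ArithmeticFunction.LSeries_zeta_mul_Lseries_moebius hs
    rw [ArithmeticFunction.LSeries_zeta_eq_riemannZeta hs] at h1
    exact eq_inv_of_mul_eq_one_left (by rw [mul_comm]; exact h1)
  have hlhs : ∑' n : ℕ, ramanujanSum b (n + 1) / ((n + 1 : ℕ) : ℂ) ^ s = LSeries f s := by
    have hterm : ∀ n : ℕ, ramanujanSum b (n + 1) / ((n + 1 : ℕ) : ℂ) ^ s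
        = LSeries.term f s (n + 1) := by
      intro n
      rw [LSeries.term_of_ne_zero (Nat.succ_ne_zero n), hconv (n + 1) (Nat.succ_pos n)]
    simp_rw [hterm]
    rw [LSeries]
    rw [Summable.tsum_eq_zero_add hsumf, LSeries.term_zero, zero_add]
  rw [hlhs, hLf, hLmu, LSeries_ramF b hb s]
  have hz : riemannZeta s ≠ 0 := riemannZeta_ne_zero_of_one_lt_re hs
  have hN : 0 < b.natAbs := Int.natAbs_pos.mpr hb
  have hNs : ((b.natAbs : ℂ)) ^ (s - 1) ≠ 0 := by
    intro h
    exact (Nat.cast_ne_zero.mpr hN.ne' : (b.natAbs : ℂ) ≠ 0)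
      (Complex.cpow_eq_zero_iff _ _ |>.mp h).1
  field_simp
end

section
/- Let N be a positive integer and a, b, c, d integers with ad - N·b·c = 1. The map (m, n) ↦ (ma + nc, Nmb + nd) is a bijection from the set (Z×Z)_{N,L} to itself, where (Z×Z)_{N,L} is the set of pairs (m,n) ∈ Z² \ {(0,0)} such that there exists t > 0 with (m,n) ∈ tZ × tZ and gcd(Nm, n) = t. -/
/-- The set `(ℤ × ℤ)_{N,L} = ⊔_{t>0} { (m,n) ∈ tℤ × tℤ : gcd(Nm, n) = t }`. -/
def ZZNL (N : ℕ) : Set (ℤ × ℤ) :=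
  {q | ∃ t : ℕ, 0 < t ∧ (t : ℤ) ∣ q.1 ∧ (t : ℤ) ∣ q.2 ∧ Int.gcd ((N : ℤ) * q.1) q.2 = t}

lemma mapsTo_ZZNL (N : ℕ) (a b c d : ℤ) (h : a * d - (N : ℤ) * b * c = 1) :
    Set.MapsTo (fun q : ℤ × ℤ => (q.1 * a + q.2 * c, (N : ℤ) * q.1 * b + q.2 * d))
      (ZZNL N) (ZZNL N) := by
  rintro ⟨m, n⟩ ⟨t, ht, hm, hn, hg⟩
  simp only [Set.mem_setOf_eq] at *
  refine ⟨t, ht, dvd_add (hm.mul_right a) (hn.mul_right c),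
    dvd_add ((hm.mul_left N).mul_right b) (hn.mul_right d), ?_⟩
  have hL : (↑(Int.gcd ((N:ℤ)*(m*a+n*c)) ((N:ℤ)*m*b+n*d)) : ℤ) ∣ (N:ℤ)*(m*a+n*c) :=
    Int.gcd_dvd_left _ _
  have hR : (↑(Int.gcd ((N:ℤ)*(m*a+n*c)) ((N:ℤ)*m*b+n*d)) : ℤ) ∣ (N:ℤ)*m*b+n*d :=
    Int.gcd_dvd_right _ _
  show Int.gcd ((N:ℤ)*(m*a+n*c)) ((N:ℤ)*m*b+n*d) = t
  apply Nat.dvd_antisymm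
  · rw [← hg]
    apply Int.natCast_dvd_natCast.mp
    have e1 : (N : ℤ) * m = (N : ℤ) * (m * a + n * c) * d - ((N : ℤ) * c) * ((N : ℤ) * m * b + n * d) := by
      linear_combination -(N : ℤ) * m * h
    have e2 : n = (-b) * ((N:ℤ) * (m * a + n * c)) + a * ((N : ℤ) * m * b + n * d) := by
      linear_combination -n * h
    refine Int.dvd_coe_gcd ?_ ?_
    · have h1 := dvd_sub (hL.mul_right d) (hR.mul_left ((N:ℤ)*c))
      rwa [← e1] at h1
    · have h2 := dvd_add (hL.mul_left (-b)) (hR.mul_left a)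
      rwa [← e2] at h2
  · apply Int.natCast_dvd_natCast.mp
    refine Int.dvd_coe_gcd ?_ ?_
    · have : (t:ℤ) ∣ (N:ℤ)*(m*a) + (N:ℤ)*(n*c) :=
        dvd_add ((hm.mul_right a).mul_left _) ((hn.mul_right c).mul_left _)
      convert this using 1; ring
    · exact dvd_add ((hm.mul_left N).mul_right b) (hn.mul_right d)

/-- If `ad - Nbc = 1`, then `(m, n) ↦ (ma + nc, Nmb + nd)` is a bijection of
`(ℤ × ℤ)_{N,L}` onto itself. -/
theorem bijOn_ZZNL
    (N : ℕ) (hN : 0 < N) (a b c d : ℤ) (h : a * d - (N : ℤ) * b * c = 1) :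
    Set.BijOn (fun q : ℤ × ℤ => (q.1 * a + q.2 * c, (N : ℤ) * q.1 * b + q.2 * d))
      (ZZNL N) (ZZNL N) := by
  have h' : d * a - (N : ℤ) * (-b) * (-c) = 1 := by linear_combination h
  have hf := mapsTo_ZZNL N a b c d h
  have hg := mapsTo_ZZNL N d (-b) (-c) a h'
  refine Set.InvOn.bijOn ⟨?_, ?_⟩ hf hg
  · rintro ⟨m, n⟩ _
    simp only [Prod.mk.injEq]
    constructor
    · linear_combination m * h
    · linear_combination n * h
  · rintro ⟨m, n⟩ _
    simp only [Prod.mk.injEq]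
    constructor
    · linear_combination m * h
    · linear_combination n * h
end
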